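/- arXiv:1801.01570 — 5 statements merged into one kernel-verified Lean document; each statement's English description precedes it below -/
import Mathlib

section
/- For all positive integers m and n, (1/2) = Σ_{k=1}^{m-1} [C(m,k)/C(m+n,k)] · [n/(m+n-k)] · (1/2) + Σ_{k=1}^{n-1} [C(n,k)/C(m+n,k)] · [m/(m+n-k)] · (1/2) + 1/C(m+n,n). -/
open Finset

/-!
Write `a k = C(M, k) / C(M + N, k)` for the probability that the first `k` draws without
replacement from an urn of `M` white and `N` black balls are all white. Then
`a (k + 1) = a k * (M - k) / (M + N - k)`, so the summand `a k * N / (M + N - k)` is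
`a k - a (k + 1)` and the sum over `1 ≤ k < M` telescopes to `M / (M + N) - 1 / C(M + N, M)`.
Applying this with `(M, N) = (m, n)` and `(n, m)`, the two sums add up to `1 - 2 / C(m + n, n)`.
-/

theorem Nat.cast_choose_succ_mul {R : Type*} [CommRing R] (n k : ℕ) :
    (n.choose (k + 1) : R) * (k + 1) = n.choose k * (n - k) := by
  rcases le_or_gt k n with hk | hk
  · simpa [Nat.cast_sub hk] using congrArg (Nat.cast : ℕ → R) (Nat.choose_succ_right_eq n k)
  · simp [Nat.choose_eq_zero_of_lt hk, Nat.choose_eq_zero_of_lt (Nat.lt_succ_of_lt hk)]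

section UrnRatio

variable {K : Type*} [Field K] [CharZero K]

theorem choose_div_choose_add_succ {M N k : ℕ} (hk : k < M + N) :
    (M.choose (k + 1) : K) / (M + N).choose (k + 1)
      = M.choose k / (M + N).choose k * ((M - k) / (M + N - k)) := by
  have hsub : (M + N - k : K) ≠ 0 := sub_ne_zero.mpr (by exact_mod_cast hk.ne')
  have hc : ((M + N).choose k : K) ≠ 0 := by exact_mod_cast (Nat.choose_pos hk.le).ne'
  have hk1 : (k + 1 : K) ≠ 0 := Nat.cast_add_one_ne_zero k
  have hM := Nat.cast_choose_succ_mul (R := K) M k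
  have hMN := Nat.cast_choose_succ_mul (R := K) (M + N) k
  push_cast at hMN
  rw [eq_div_iff hk1 |>.mpr hM, eq_div_iff hk1 |>.mpr hMN]
  field_simp

theorem choose_div_choose_add_mul_div_sub {M N k : ℕ} (hk : k < M + N) :
    (M.choose k : K) / (M + N).choose k * (N / (M + N - k))
      = M.choose k / (M + N).choose k - M.choose (k + 1) / (M + N).choose (k + 1) := by
  have hsub : (M + N - k : K) ≠ 0 := sub_ne_zero.mpr (by exact_mod_cast hk.ne')
  rw [choose_div_choose_add_succ hk]
  field_simp
  ring

theorem sum_choose_div_choose_add_mul_div_sub {M : ℕ} (N : ℕ) (hM : 1 ≤ M) :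
    ∑ k ∈ Icc 1 (M - 1), (M.choose k : K) / (M + N).choose k * (N / (M + N - k))
      = M / (M + N) - 1 / (M + N).choose M := by
  have hIcc : Icc 1 (M - 1) = Ico 1 M := by ext; simp; omega
  let a : ℕ → K := fun k ↦ M.choose k / (M + N).choose k
  calc ∑ k ∈ Icc 1 (M - 1), (M.choose k : K) / (M + N).choose k * (N / (M + N - k))
      = ∑ k ∈ Ico 1 M, (a k - a (k + 1)) := by
        rw [hIcc]
        refine sum_congr rfl fun k hk ↦ choose_div_choose_add_mul_div_sub ?_
        have := (mem_Ico.mp hk).2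
        omega
    _ = a 1 - a M := by
        rw [← neg_sub, ← sum_Ico_sub a hM, ← sum_neg_distrib]
        simp only [neg_sub]
    _ = M / (M + N) - 1 / (M + N).choose M := by simp [a]

end UrnRatio

theorem urn_trivial_identity (m n : ℕ) (hm : 1 ≤ m) (hn : 1 ≤ n) :
    (1 / 2 : ℚ) =
      (∑ k ∈ Finset.Icc 1 (m - 1), ((Nat.choose m k : ℚ) / (Nat.choose (m + n) k)) *
          ((n : ℚ) / ((m : ℚ) + (n : ℚ) - (k : ℚ))) * (1 / 2))
      + (∑ k ∈ Finset.Icc 1 (n - 1), ((Nat.choose n k : ℚ) / (Nat.choose (m + n) k)) *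
          ((m : ℚ) / ((m : ℚ) + (n : ℚ) - (k : ℚ))) * (1 / 2))
      + 1 / (Nat.choose (m + n) n : ℚ) := by
  have hm_sum := sum_choose_div_choose_add_mul_div_sub (K := ℚ) n hm
  have hn_sum := sum_choose_div_choose_add_mul_div_sub (K := ℚ) m hn
  rw [Nat.choose_symm_add] at hm_sum
  rw [add_comm n m] at hn_sum
  rw [add_comm (n : ℚ) m] at hn_sum
  have hmn : (m + n : ℚ) ≠ 0 := by positivity
  rw [← sum_mul, ← sum_mul, hm_sum, hn_sum]
  field_simp
  ring
end

section
/- Define P : ℕ × ℕ → ℚ by P(m,0)=1 for all m, P(0,n)=0 for all n≥1, and for m,n≥1, P(m,n) = Σ_{k=1}^{m} [C(m,k)/C(m+n,k)] · [n/(m+n-k)] · P(m-k,n) + Σ_{k=1}^{n} [C(n,k)/C(m+n,k)] · [m/(m+n-k)] · P(m,n-k). Then P(m,n) = 1/2 for all m,n ≥ 1. -/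
/-!
With `a k = C(m,k) / C(m+n,k)`, the weight of the `k`-th term of the first sum is `a k - a (k+1)`,
so these weights telescope to `m / (m+n)`, and symmetrically the second ones to `n / (m+n)`.
By strong induction on `m + n`, every term of the recursion has value `1/2` except the two that
empty one colour (`P 0 n = 0` and `P m 0 = 1`); both carry the weight `1 / C(m+n,m)`, so their
deviations from `1/2` cancel.
-/

open Finset

lemma Finset.sum_mul_eq_const_mul_add_single {ι R : Type*} [CommRing R] {s : Finset ι} {a : ι}
    (ha : a ∈ s) (w f : ι → R) (c : R) (hf : ∀ i ∈ s, i ≠ a → f i = c) :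
    ∑ i ∈ s, w i * f i = c * ∑ i ∈ s, w i + w a * (f a - c) := by
  calc ∑ i ∈ s, w i * f i = ∑ i ∈ s, (c * w i + w i * (f i - c)) :=
        sum_congr rfl fun i _ => by ring
    _ = c * ∑ i ∈ s, w i + ∑ i ∈ s, w i * (f i - c) := by rw [sum_add_distrib, mul_sum]
    _ = c * ∑ i ∈ s, w i + w a * (f a - c) := by
        rw [sum_eq_single_of_mem (f := fun i => w i * (f i - c)) a ha
          fun i hi hia => by rw [hf i hi hia, sub_self, mul_zero]]

lemma choose_div_choose_mul_eq_sub {m n k : ℕ} (hk : k ≤ m) (hn : n ≠ 0) :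
    (m.choose k : ℚ) / (m + n).choose k * (n / (m + n - k)) =
      (m.choose k : ℚ) / (m + n).choose k - (m.choose (k + 1) : ℚ) / (m + n).choose (k + 1) := by
  have hk' : k < m + n := by omega
  have hsucc : (m.choose (k + 1) : ℚ) * (k + 1) = m.choose k * (m - k) := by
    rw [← Nat.cast_sub hk]; exact_mod_cast Nat.choose_succ_right_eq m k
  have hsucc' : ((m + n).choose (k + 1) : ℚ) * (k + 1) = (m + n).choose k * (m + n - k) := by
    rw [← Nat.cast_add, ← Nat.cast_sub hk'.le]; exact_mod_cast Nat.choose_succ_right_eq (m + n) k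
  have hpos : (0 : ℚ) < (m + n).choose k := by exact_mod_cast Nat.choose_pos hk'.le
  have hpos' : (0 : ℚ) < (m + n).choose (k + 1) := by exact_mod_cast Nat.choose_pos hk'
  have hgap : (0 : ℚ) < m + n - k := by
    rw [sub_pos]; exact_mod_cast hk'
  field_simp
  linear_combination ((m + n).choose (k + 1) : ℚ) * hsucc - (m.choose (k + 1) : ℚ) * hsucc'

lemma sum_choose_div_choose_mul {m n : ℕ} (hn : n ≠ 0) :
    ∑ k ∈ Icc 1 m, (m.choose k : ℚ) / (m + n).choose k * (n / (m + n - k)) = m / (m + n) := by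
  set a : ℕ → ℚ := fun k => (m.choose k : ℚ) / (m + n).choose k
  calc ∑ k ∈ Icc 1 m, a k * (n / (m + n - k)) = ∑ k ∈ Icc 1 m, -(a (k + 1) - a k) :=
        sum_congr rfl fun k hk => by
          rw [neg_sub]; exact choose_div_choose_mul_eq_sub (mem_Icc.mp hk).2 hn
    _ = a 1 - a (m + 1) := by
        rw [sum_neg_distrib, ← Ico_add_one_right_eq_Icc, sum_Ico_sub a (by omega), neg_sub]
    _ = m / (m + n) := by simp [a]

lemma choose_self_div_choose_mul {m n : ℕ} (hn : n ≠ 0) :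
    (m.choose m : ℚ) / (m + n).choose m * (n / (m + n - m)) = ((m + n).choose m : ℚ)⁻¹ := by
  rw [Nat.choose_self, add_sub_cancel_left, div_self (by exact_mod_cast hn)]
  simp

theorem urn_probability_half (P : ℕ → ℕ → ℚ)
    (hP1 : ∀ m, P m 0 = 1) (hP2 : ∀ n, 1 ≤ n → P 0 n = 0)
    (hrec : ∀ m n : ℕ, 1 ≤ m → 1 ≤ n → P m n =
      (∑ k ∈ Finset.Icc 1 m, ((Nat.choose m k : ℚ) / (Nat.choose (m+n) k)) *
          ((n : ℚ) / ((m : ℚ) + (n : ℚ) - (k : ℚ))) * P (m - k) n)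
      + (∑ k ∈ Finset.Icc 1 n, ((Nat.choose n k : ℚ) / (Nat.choose (m+n) k)) *
          ((m : ℚ) / ((m : ℚ) + (n : ℚ) - (k : ℚ))) * P m (n - k))) :
    ∀ m n : ℕ, 1 ≤ m → 1 ≤ n → P m n = 1 / 2 := by
  intro m n
  induction hs : m + n using Nat.strong_induction_on generalizing m n with
  | _ s ih =>
  intro hm hn
  have hleft : ∀ k ∈ Icc 1 m, k ≠ m → P (m - k) n = 1 / 2 := fun k hk hkm =>
    ih (m - k + n) (by grind) (m - k) n rfl (by grind) hn
  have hright : ∀ k ∈ Icc 1 n, k ≠ n → P m (n - k) = 1 / 2 := fun k hk hkn =>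
    ih (m + (n - k)) (by grind) m (n - k) rfl hm (by grind)
  have hsum_right := sum_choose_div_choose_mul (m := n) (n := m) (by omega)
  have htop_right := choose_self_div_choose_mul (m := n) (n := m) (by omega)
  rw [Nat.add_comm n m, add_comm (n : ℚ)] at hsum_right htop_right
  rw [hrec m n hm hn, sum_mul_eq_const_mul_add_single (by simp [hm]) _ _ _ hleft,
    sum_mul_eq_const_mul_add_single (by simp [hn]) _ _ _ hright,
    sum_choose_div_choose_mul (by omega), choose_self_div_choose_mul (by omega), hsum_right,
    htop_right, Nat.sub_self, Nat.sub_self, hP1, hP2 n hn, Nat.choose_symm_add]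
  field_simp
  ring
end

section
/- With E defined by the urn solitaire expectation recurrence, E(m,n) = E(n,m) for all natural numbers m, n. -/
/-!
Strong induction on `m + n`. Every value of `E` on the right-hand side of the recurrence for
`(m, n)` has a strictly smaller total, so by induction it may be replaced by its mirror image;
the recurrence for `(n, m)` is then the recurrence for `(m, n)` with its two sums interchanged.
-/

theorem eq_swap_of_forall_add_lt {α : Type*} (f : ℕ → ℕ → α)
    (h : ∀ m n, (∀ m' n', m' + n' < m + n → f m' n' = f n' m') → f m n = f n m) :
    ∀ m n, f m n = f n m := by
  intro m n
  induction hs : m + n using Nat.strong_induction_on generalizing m n with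
  | _ s ih => exact h m n fun m' n' hlt => ih _ (hs ▸ hlt) m' n' rfl

theorem urn_expectation_symmetric (E : ℕ → ℕ → ℚ)
    (hE1 : ∀ m, E m 0 = 0) (hE2 : ∀ n, E 0 n = 0)
    (hrec : ∀ m n : ℕ, 1 ≤ m → 1 ≤ n → E m n = 1
      + ∑ k ∈ Finset.Icc 1 m, ((Nat.choose m k : ℚ) / (Nat.choose (m+n) k)) * ((n : ℚ) / ((m : ℚ) + (n : ℚ) - (k : ℚ))) * E (m - k) n
      + ∑ k ∈ Finset.Icc 1 n, ((Nat.choose n k : ℚ) / (Nat.choose (m+n) k)) * ((m : ℚ) / ((m : ℚ) + (n : ℚ) - (k : ℚ))) * E m (n - k)) :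
    ∀ m n : ℕ, E m n = E n m := by
  refine eq_swap_of_forall_add_lt E fun m n ih => ?_
  rcases Nat.eq_zero_or_pos m with rfl | hm
  · rw [hE1, hE2]
  rcases Nat.eq_zero_or_pos n with rfl | hn
  · rw [hE1, hE2]
  have hleft : ∀ k ∈ Finset.Icc 1 m, E (m - k) n = E n (m - k) := fun k hk =>
    ih _ _ (by have := (Finset.mem_Icc.mp hk).1; omega)
  have hright : ∀ k ∈ Finset.Icc 1 n, E m (n - k) = E (n - k) m := fun k hk =>
    ih _ _ (by have := (Finset.mem_Icc.mp hk).1; omega)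
  rw [hrec m n hm hn, hrec n m hn hm, Nat.add_comm n m, add_comm (n : ℚ) m,
    Finset.sum_congr rfl fun k hk => congrArg (_ * ·) (hleft k hk),
    Finset.sum_congr rfl fun k hk => congrArg (_ * ·) (hright k hk)]
  exact add_right_comm _ _ _
end

section
/- For all positive integers m and n and all k with 1 ≤ k ≤ m, the probability that the first round of urn solitaire consists of exactly k balls of the green color followed by one red ball equals [C(m,k)/C(m+n,k)] · [n/(m+n-k)], and these probabilities together with the symmetric red-then-green ones sum to 1: Σ_{k=1}^{m} [C(m,k)/C(m+n,k)]·[n/(m+n-k)] + Σ_{k=1}^{n} [C(n,k)/C(m+n,k)]·[m/(m+n-k)] = 1. -/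
/-! Write `N = m + n`. The probability that the first `k` draws are all green is
`C(m,k)/C(N,k)`, and the round consists of exactly `k` greens and then a red precisely when the
first `k` draws are green but the first `k + 1` are not. Hence the `k`-th green-first term is
`C(m,k)/C(N,k) - C(m,k+1)/C(N,k+1)`, the green-first sum telescopes to `C(m,1)/C(N,1) = m/N`,
and symmetrically the red-first sum is `n/N`. -/

open Finset Nat

lemma Nat.cast_choose_succ_mul_succ {R : Type*} [CommRing R] (a k : ℕ) :
    (a.choose (k + 1) : R) * (k + 1) = a.choose k * (a - k) := by
  rcases le_or_gt k a with hka | hak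
  · have h := congrArg (Nat.cast : ℕ → R) (choose_succ_right_eq a k)
    push_cast [Nat.cast_sub hka] at h
    exact h
  · simp [choose_eq_zero_of_lt hak, choose_eq_zero_of_lt (Nat.lt_succ_of_lt hak)]

lemma choose_div_choose_mul_div_eq_sub {a b k : ℕ} (hk : k < a + b) :
    (a.choose k / (a + b).choose k : ℚ) * (b / (a + b - k)) =
      a.choose k / (a + b).choose k - a.choose (k + 1) / (a + b).choose (k + 1) := by
  have hchoose : ((a + b).choose k : ℚ) ≠ 0 := by exact_mod_cast (choose_pos hk.le).ne'
  have hgap : (a + b - k : ℚ) ≠ 0 := sub_ne_zero.2 (by exact_mod_cast hk.ne')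
  have hsucc : (k + 1 : ℚ) ≠ 0 := k.cast_add_one_ne_zero
  rw [eq_div_of_mul_eq hsucc (Nat.cast_choose_succ_mul_succ a k),
    eq_div_of_mul_eq hsucc (Nat.cast_choose_succ_mul_succ (a + b) k)]
  push_cast
  field_simp
  ring

lemma sum_choose_div_choose_mul_div {a b : ℕ} (ha : 1 ≤ a) (hb : 0 < b) :
    ∑ k ∈ Icc 1 a, (a.choose k / (a + b).choose k : ℚ) * (b / (a + b - k)) = a / (a + b) := by
  set g : ℕ → ℚ := fun k ↦ a.choose k / (a + b).choose k
  calc ∑ k ∈ Icc 1 a, (a.choose k / (a + b).choose k : ℚ) * (b / (a + b - k))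
      = ∑ k ∈ Icc 1 a, -(g (k + 1) - g k) := sum_congr rfl fun k hk ↦ by
        rw [neg_sub]
        exact choose_div_choose_mul_div_eq_sub (by grind)
    _ = g 1 - g (a + 1) := by rw [sum_neg_distrib, sum_Icc_sub ha, neg_sub]
    _ = a / (a + b) := by simp [g, choose_succ_self]

theorem urn_round_probabilities_sum_to_one (m n : ℕ) (hm : 1 ≤ m) (hn : 1 ≤ n) :
    (∑ k ∈ Finset.Icc 1 m, ((Nat.choose m k : ℚ) / (Nat.choose (m + n) k)) *
        ((n : ℚ) / ((m : ℚ) + (n : ℚ) - (k : ℚ))))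
    + (∑ k ∈ Finset.Icc 1 n, ((Nat.choose n k : ℚ) / (Nat.choose (m + n) k)) *
        ((m : ℚ) / ((m : ℚ) + (n : ℚ) - (k : ℚ)))) = 1 := by
  have green_first := sum_choose_div_choose_mul_div hm hn
  have red_first := sum_choose_div_choose_mul_div hn hm
  rw [Nat.add_comm n m, add_comm (n : ℚ)] at red_first
  have hmn : (m + n : ℚ) ≠ 0 := by positivity
  rw [green_first, red_first, ← add_div, div_self hmn]
end

section
/- With E the urn solitaire expected duration, E(m,n) < m + n − 1 whenever m + n ≥ 3 and m, n ≥ 1. -/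
/-!
Write `f k = C(m,k) / C(m+n,k)`. Since `f (k+1) = f k · (m-k)/(m+n-k)`, the weight of the
transition `(m,n) → (m-k,n)` is `f k - f (k+1)`, so these weights telescope to
`f 1 - f (m+1) = m/(m+n)`, and symmetrically for the other colour: the transition weights out of
`(m,n)` sum to `1`. By induction on `m+n`, every successor state `(a,b)` of `(m,n)` has
`E a b ≤ a + b - 1 ≤ m + n - 2`, hence `E m n ≤ 1 + (m+n-2)`. The inequality is strict because the
successor `(0,n)` is reached with positive weight and `E 0 n = 0 < m + n - 2` once `m + n ≥ 3`.
-/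

open Finset

def drawWeight (m n k : ℕ) : ℚ :=
  (m.choose k : ℚ) / (m + n).choose k * ((n : ℚ) / ((m : ℚ) + (n : ℚ) - (k : ℚ)))

lemma cast_choose_succ_mul {m k : ℕ} (hk : k ≤ m) :
    (m.choose (k + 1) : ℚ) * (k + 1) = m.choose k * ((m : ℚ) - k) := by
  have h := congrArg (Nat.cast : ℕ → ℚ) (Nat.choose_succ_right_eq m k)
  push_cast [Nat.cast_sub hk] at h
  exact h

lemma drawWeight_eq_sub {m n k : ℕ} (hk : k ≤ m) (hn : 0 < n) :
    drawWeight m n k = (m.choose k : ℚ) / (m + n).choose k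
      - (m.choose (k + 1) : ℚ) / (m + n).choose (k + 1) := by
  have hN : ((m + n).choose k : ℚ) ≠ 0 := by exact_mod_cast (Nat.choose_pos (by omega)).ne'
  have hN' : ((m + n).choose (k + 1) : ℚ) ≠ 0 := by exact_mod_cast (Nat.choose_pos (by omega)).ne'
  have hd : (m : ℚ) + n - k ≠ 0 := by
    have : (k : ℚ) < m + n := by exact_mod_cast (by omega : k < m + n)
    linarith
  have h₁ := cast_choose_succ_mul hk
  have h₂ := cast_choose_succ_mul (show k ≤ m + n by omega)
  push_cast at h₂
  have hratio : (m.choose (k + 1) : ℚ) / (m + n).choose (k + 1)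
      = m.choose k * ((m : ℚ) - k) / ((m + n).choose k * ((m : ℚ) + n - k)) := by
    rw [div_eq_div_iff hN' (mul_ne_zero hN hd)]
    linear_combination ((m + n).choose (k + 1) : ℚ) * h₁ - (m.choose (k + 1) : ℚ) * h₂
  rw [drawWeight, hratio]
  field_simp
  ring

lemma drawWeight_nonneg {m k : ℕ} (n : ℕ) (hk : k ≤ m) : 0 ≤ drawWeight m n k := by
  have : (k : ℚ) ≤ m := by exact_mod_cast hk
  exact mul_nonneg (by positivity)
    (div_nonneg (by positivity) (by linarith [n.cast_nonneg (α := ℚ)]))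

lemma drawWeight_self_pos (m : ℕ) {n : ℕ} (hn : 0 < n) : 0 < drawWeight m n m := by
  have : (0 : ℚ) < n := by exact_mod_cast hn
  unfold drawWeight
  rw [add_sub_cancel_left, Nat.choose_self, div_self this.ne']
  have := Nat.choose_pos (Nat.le_add_right m n)
  positivity

lemma sum_drawWeight {m n : ℕ} (hm : 0 < m) (hn : 0 < n) :
    ∑ k ∈ Icc 1 m, drawWeight m n k = m / (m + n) := by
  have htel := sum_Icc_sub (Nat.one_le_iff_ne_zero.mpr hm.ne')
    fun k => (m.choose k : ℚ) / (m + n).choose k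
  rw [sum_congr rfl fun k hk => drawWeight_eq_sub (mem_Icc.mp hk).2 hn, ← neg_inj,
    ← sum_neg_distrib]
  simp only [neg_sub]
  rw [htel]
  simp

lemma sum_drawWeight_mul_le {m n : ℕ} (hm : 0 < m) (hn : 0 < n) {x : ℕ → ℚ} {c : ℚ}
    (hx : ∀ k ∈ Icc 1 m, x k ≤ c) :
    ∑ k ∈ Icc 1 m, drawWeight m n k * x k ≤ m / (m + n) * c := by
  rw [← sum_drawWeight hm hn, sum_mul]
  exact sum_le_sum fun k hk =>
    mul_le_mul_of_nonneg_left (hx k hk) (drawWeight_nonneg n (mem_Icc.mp hk).2)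

lemma sum_drawWeight_mul_lt {m n : ℕ} (hm : 0 < m) (hn : 0 < n) {x : ℕ → ℚ} {c : ℚ}
    (hx : ∀ k ∈ Icc 1 m, x k ≤ c) (hxm : x m < c) :
    ∑ k ∈ Icc 1 m, drawWeight m n k * x k < m / (m + n) * c := by
  rw [← sum_drawWeight hm hn, sum_mul]
  exact sum_lt_sum
    (fun k hk => mul_le_mul_of_nonneg_left (hx k hk) (drawWeight_nonneg n (mem_Icc.mp hk).2))
    ⟨m, mem_Icc.mpr ⟨hm, le_rfl⟩, mul_lt_mul_of_pos_left hxm (drawWeight_self_pos m hn)⟩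

lemma div_mul_add_div_mul_eq {m : ℕ} (n : ℕ) (hm : 0 < m) (c : ℚ) :
    (m : ℚ) / (m + n) * c + n / (n + m) * c = c := by
  have : (0 : ℚ) < m := by exact_mod_cast hm
  rw [← add_mul, add_comm (n : ℚ), ← add_div, div_self (by positivity), one_mul]

structure IsUrnDuration (E : ℕ → ℕ → ℚ) : Prop where
  right_zero : ∀ m, E m 0 = 0
  left_zero : ∀ n, E 0 n = 0
  eq_one_add : ∀ m n, 0 < m → 0 < n → E m n = 1
    + ∑ k ∈ Icc 1 m, drawWeight m n k * E (m - k) n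
    + ∑ k ∈ Icc 1 n, drawWeight n m k * E m (n - k)

namespace IsUrnDuration

variable {E : ℕ → ℕ → ℚ} {m n : ℕ} {c : ℚ}

lemma le_one_add (hE : IsUrnDuration E) (hm : 0 < m) (hn : 0 < n)
    (h : ∀ a b, 1 ≤ a + b → a + b < m + n → E a b ≤ c) : E m n ≤ 1 + c := by
  have h₁ := sum_drawWeight_mul_le hm hn fun k hk => h (m - k) n (by omega) (by simp at hk; omega)
  have h₂ := sum_drawWeight_mul_le hn hm fun k hk => h m (n - k) (by omega) (by simp at hk; omega)
  rw [hE.eq_one_add m n hm hn]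
  linarith [div_mul_add_div_mul_eq n hm c]

lemma lt_one_add (hE : IsUrnDuration E) (hm : 0 < m) (hn : 0 < n) (hc : 0 < c)
    (h : ∀ a b, 1 ≤ a + b → a + b < m + n → E a b ≤ c) : E m n < 1 + c := by
  have h₁ := sum_drawWeight_mul_lt hm hn
    (fun k hk => h (m - k) n (by omega) (by simp at hk; omega))
    (by rw [Nat.sub_self, hE.left_zero]; exact hc)
  have h₂ := sum_drawWeight_mul_le hn hm fun k hk => h m (n - k) (by omega) (by simp at hk; omega)
  rw [hE.eq_one_add m n hm hn]
  linarith [div_mul_add_div_mul_eq n hm c]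

lemma le_add_sub_one (hE : IsUrnDuration E) (m n : ℕ) (hmn : 1 ≤ m + n) :
    E m n ≤ m + n - 1 := by
  induction hN : m + n using Nat.strong_induction_on generalizing m n with
  | _ N ih =>
    subst hN
    rcases m.eq_zero_or_pos with rfl | hm
    · have : (1 : ℚ) ≤ (0 : ℕ) + n := by exact_mod_cast hmn
      linarith [hE.left_zero n]
    rcases n.eq_zero_or_pos with rfl | hn
    · have : (1 : ℚ) ≤ m + (0 : ℕ) := by exact_mod_cast hmn
      linarith [hE.right_zero m]
    have := hE.le_one_add (c := m + n - 2) hm hn fun a b hab hlt => by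
      have : (a + b + 1 : ℚ) ≤ m + n := by exact_mod_cast hlt
      linarith [ih _ hlt a b hab rfl]
    linarith

end IsUrnDuration

theorem urn_expectation_strict_upper_bound (E : ℕ → ℕ → ℚ)
    (hE1 : ∀ m, E m 0 = 0) (hE2 : ∀ n, E 0 n = 0)
    (hrec : ∀ m n : ℕ, 1 ≤ m → 1 ≤ n → E m n = 1
      + ∑ k ∈ Finset.Icc 1 m, ((Nat.choose m k : ℚ) / (Nat.choose (m+n) k)) * ((n : ℚ) / ((m : ℚ) + (n : ℚ) - (k : ℚ))) * E (m - k) n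
      + ∑ k ∈ Finset.Icc 1 n, ((Nat.choose n k : ℚ) / (Nat.choose (m+n) k)) * ((m : ℚ) / ((m : ℚ) + (n : ℚ) - (k : ℚ))) * E m (n - k)) :
    ∀ m n : ℕ, 1 ≤ m → 1 ≤ n → 3 ≤ m + n → E m n < (m : ℚ) + (n : ℚ) - 1 := by
  have hE : IsUrnDuration E := ⟨hE1, hE2, fun m n hm hn => by
    simp only [hrec m n hm hn, drawWeight, Nat.add_comm n m, add_comm (n : ℚ) m]⟩
  intro m n hm hn h3
  have h3' : (3 : ℚ) ≤ m + n := by exact_mod_cast h3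
  have := hE.lt_one_add (c := m + n - 2) hm hn (by linarith) fun a b hab hlt => by
    have : (a + b + 1 : ℚ) ≤ m + n := by exact_mod_cast hlt
    linarith [hE.le_add_sub_one a b hab]
  linarith
end
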